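/- Two-point shift symmetry (identity (t18) of the paper): let l, m ∈ {1,…,N} with l ≠ m, and let l' ∈ {1,…,N} be the representative of 2m − l modulo N. Then for every k with 1 ≤ k ≤ N, ∑_{I ⊆ {1,…,N}, |I| = k, m ∈ I and l ∈ I} ∏_{i∈I, j∉I} φ(x_j − x_i) = ∑_{I' ⊆ {1,…,N}, |I'| = k, m ∈ I' and l' ∈ I'} ∏_{i∈I', j∉I'} φ(x_j − x_i). -/

import Mathlib

open Complex Finset

/-- The odd theta function `ϑ(z|τ)`. -/
noncomputable def ϑ (τ : ℂ) (z : ℂ) : ℂ :=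
  -∑' k : ℤ, Complex.exp (Real.pi * Complex.I * τ * ((k : ℂ) + 1 / 2) ^ 2
      + 2 * Real.pi * Complex.I * (z + 1 / 2) * ((k : ℂ) + 1 / 2))

/-- The Kronecker elliptic function `φ(z) = ϑ'(0)·ϑ(z+ħ)/(ϑ(z)·ϑ(ħ))`. -/
noncomputable def φ₁ (τ hbar z : ℂ) : ℂ :=
  deriv (ϑ τ) 0 * ϑ τ (z + hbar) / (ϑ τ z * ϑ τ hbar)

/-!
Reflection `x ↦ 2m - x` of `ZMod N` fixes `m`, exchanges `l` and `l'` and permutes the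
`k`-subsets. Since `ϑ(z + 1) = -ϑ(z)`, `φ` is `1`-periodic, so the cut product
`∏_{i ∈ I, j ∉ I} φ(x_j - x_i)` only depends on the image of `I` in `ZMod N`, and reflecting `I`
turns it into `∏_{i ∈ I, j ∉ I} φ(x_i - x_j)`. These agree because, in any finite abelian group,
the differences `j - i` across a cut `(I, Iᶜ)` form a multiset invariant under negation.
-/

lemma Finset.prod_prod_eq_prod_map_bind {α γ β M : Type*} [CommMonoid M] (f : β → M)
    (s : Finset α) (t : Finset γ) (g : α → γ → β) :
    ∏ i ∈ s, ∏ j ∈ t, f (g i j) = ((s.val.bind fun i => t.val.map (g i)).map f).prod := by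
  simp only [prod_eq_multiset_prod, Multiset.map_bind, Multiset.prod_bind, Multiset.map_map,
    Function.comp_def]

section CutProduct

variable {G : Type*} [AddCommGroup G] [Fintype G] [DecidableEq G]

def cutProd {M : Type*} [CommMonoid M] (f : G → M) (s : Finset G) : M :=
  ∏ i ∈ s, ∏ j ∈ sᶜ, f (j - i)

/-- Each difference `d` occurs as `j - i` with `i ∈ s`, `j ∉ s` exactly as often as `-d` does:
adding the differences inside `s`, which are symmetric, gives `#s` copies of `G` either way. -/
lemma cutProd_comp_neg {M : Type*} [CommMonoid M] (f : G → M) (s : Finset G) :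
    cutProd (fun d => f (-d)) s = cutProd f s := by
  have hsplit (g : G → G ≃ G) :
      (s.val.bind fun i => sᶜ.val.map (g i)) + (s.val.bind fun i => s.val.map (g i))
        = s.val.bind fun _ => univ.val := by
    simp only [← Multiset.bind_add, ← Multiset.map_add, add_comm sᶜ.val,
      ← disjUnion_val s sᶜ disjoint_compl_right, disjUnion_eq_union, union_compl,
      Multiset.map_univ_val_equiv]
  have hinner : (s.val.bind fun i => s.val.map (· - i)) = s.val.bind fun i => s.val.map (i - ·) :=
    Multiset.bind_map_comm _ _
  have hcross : (s.val.bind fun i => sᶜ.val.map (· - i))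
      = s.val.bind fun i => sᶜ.val.map (i - ·) := by
    apply add_right_cancel (b := s.val.bind fun i => s.val.map (· - i))
    calc _ = s.val.bind fun _ => univ.val := hsplit Equiv.subRight
      _ = _ := by rw [hinner]; exact (hsplit Equiv.subLeft).symm
  have hneg : cutProd (fun d => f (-d)) s = ∏ i ∈ s, ∏ j ∈ sᶜ, f (i - j) := by
    simp only [cutProd, neg_sub]
  rw [hneg, cutProd, prod_prod_eq_prod_map_bind f s sᶜ (fun i j => i - j),
    prod_prod_eq_prod_map_bind f s sᶜ (fun i j => j - i), hcross]

lemma cutProd_map_subLeft {M : Type*} [CommMonoid M] (f : G → M) (s : Finset G) (c : G) :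
    cutProd f (s.map (Equiv.subLeft c).toEmbedding) = cutProd f s := by
  have hcompl : (s.map (Equiv.subLeft c).toEmbedding)ᶜ = sᶜ.map (Equiv.subLeft c).toEmbedding := by
    ext; simp [mem_map_equiv]
  rw [← cutProd_comp_neg, cutProd, hcompl]
  simp only [prod_map, Equiv.coe_toEmbedding, Equiv.subLeft_apply, sub_sub_sub_cancel_left, neg_sub]
  rfl

lemma sum_cutProd_filter_reflect {M : Type*} [CommSemiring M] (f : G → M) (k : ℕ) (c x y : G) :
    ∑ s ∈ (univ.powersetCard k).filter (fun s => x ∈ s ∧ y ∈ s), cutProd f s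
      = ∑ s ∈ (univ.powersetCard k).filter (fun s => c - x ∈ s ∧ c - y ∈ s), cutProd f s := by
  refine sum_equiv (Equiv.subLeft c).finsetCongr (fun s => ?_) (fun s _ => ?_)
  · simp [mem_map_equiv]
  · rw [Equiv.finsetCongr_apply, cutProd_map_subLeft]

end CutProduct

lemma ϑ_antiperiodic (τ : ℂ) : Function.Antiperiodic (ϑ τ) 1 := by
  intro z
  have hterm (k : ℤ) : Complex.exp (Real.pi * Complex.I * τ * ((k : ℂ) + 1 / 2) ^ 2
      + 2 * Real.pi * Complex.I * (z + 1 + 1 / 2) * ((k : ℂ) + 1 / 2))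
      = -Complex.exp (Real.pi * Complex.I * τ * ((k : ℂ) + 1 / 2) ^ 2
      + 2 * Real.pi * Complex.I * (z + 1 / 2) * ((k : ℂ) + 1 / 2)) := by
    rw [show Real.pi * Complex.I * τ * ((k : ℂ) + 1 / 2) ^ 2
        + 2 * Real.pi * Complex.I * (z + 1 + 1 / 2) * ((k : ℂ) + 1 / 2)
        = (Real.pi * Complex.I * τ * ((k : ℂ) + 1 / 2) ^ 2
          + 2 * Real.pi * Complex.I * (z + 1 / 2) * ((k : ℂ) + 1 / 2))
          + (k * (2 * Real.pi * Complex.I) + Real.pi * Complex.I) by ring,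
      Complex.exp_add, Complex.exp_add, Complex.exp_add, Complex.exp_int_mul_two_pi_mul_I,
      Complex.exp_pi_mul_I]
    ring
  rw [ϑ, ϑ, tsum_congr hterm, tsum_neg]

lemma φ₁_periodic (τ hbar : ℂ) : Function.Periodic (φ₁ τ hbar) 1 := by
  intro z
  rw [φ₁, φ₁, add_right_comm, ϑ_antiperiodic, ϑ_antiperiodic, mul_neg, neg_mul, neg_div_neg_eq]

section Residues

variable (N : ℕ) [NeZero N]

noncomputable def φ₁Mod (τ hbar : ℂ) (d : ZMod N) : ℂ :=
  φ₁ τ hbar ((d.val : ℂ) / N)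

variable {N}

lemma φ₁Mod_intCast (τ hbar : ℂ) (x : ℤ) : φ₁Mod N τ hbar x = φ₁ τ hbar ((x : ℂ) / N) := by
  have hN : (N : ℂ) ≠ 0 := Nat.cast_ne_zero.mpr (NeZero.ne N)
  have hx : (x : ℂ) / N = ((x : ZMod N).val : ℂ) / N + (x / N : ℤ) * 1 := by
    have := congrArg (fun n : ℤ => (n : ℂ)) (Int.emod_add_mul_ediv x N)
    rw [← ZMod.val_intCast x] at this
    push_cast at this
    field_simp
    linear_combination -this
  rw [φ₁Mod, hx, (φ₁_periodic τ hbar).int_mul]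

variable (N)

/-- Residues mod `N` represented in `{1, …, N}` (the residue `0` by `N`). -/
def iccRep : ZMod N ↪ ℕ where
  toFun a := (a - 1).val + 1
  inj' _ _ h := sub_left_inj.mp (ZMod.val_injective N (Nat.succ_injective h))

variable {N}

@[simp]
lemma natCast_iccRep (a : ZMod N) : ((iccRep N a : ℕ) : ZMod N) = a := by
  change (((a - 1).val + 1 : ℕ) : ZMod N) = a
  simp

lemma map_univ_iccRep : univ.map (iccRep N) = Icc 1 N := by
  refine eq_of_subset_of_card_le (fun i hi => ?_) (by simp)
  obtain ⟨a, -, rfl⟩ := mem_map.mp hi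
  exact mem_Icc.mpr ⟨Nat.le_add_left _ _, (ZMod.val_lt _)⟩

lemma iccRep_natCast {i : ℕ} (hi : i ∈ Icc 1 N) : iccRep N (i : ZMod N) = i := by
  rw [← map_univ_iccRep] at hi
  obtain ⟨a, -, rfl⟩ := mem_map.mp hi
  rw [natCast_iccRep]

lemma φ₁Mod_natCast_sub (τ hbar : ℂ) (a b : ℕ) :
    φ₁ τ hbar ((a : ℂ) / N - (b : ℂ) / N) = φ₁Mod N τ hbar (a - b) := by
  simpa [sub_div] using (φ₁Mod_intCast τ hbar ((a : ℤ) - b)).symm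

lemma mem_map_iccRep {i : ℕ} (hi : i ∈ Icc 1 N) (s : Finset (ZMod N)) :
    i ∈ s.map (iccRep N) ↔ (i : ZMod N) ∈ s := by
  rw [← iccRep_natCast hi, mem_map', natCast_iccRep]

lemma prod_prod_Icc_sdiff_map_iccRep (τ hbar : ℂ) (s : Finset (ZMod N)) :
    ∏ i ∈ s.map (iccRep N), ∏ j ∈ Icc 1 N \ s.map (iccRep N),
        φ₁ τ hbar ((j : ℂ) / N - (i : ℂ) / N) = cutProd (φ₁Mod N τ hbar) s := by
  rw [← map_univ_iccRep, ← Finset.map_sdiff, ← compl_eq_univ_sdiff, cutProd, prod_map]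
  refine prod_congr rfl fun i _ => ?_
  rw [prod_map]
  refine prod_congr rfl fun j _ => ?_
  rw [φ₁Mod_natCast_sub, natCast_iccRep, natCast_iccRep]

lemma sum_filter_powersetCard_Icc_eq_sum_cutProd (τ hbar : ℂ) (k : ℕ) {m l : ℕ}
    (hm : m ∈ Icc 1 N) (hl : l ∈ Icc 1 N) :
    ∑ I ∈ ((Icc 1 N).powersetCard k).filter (fun I => m ∈ I ∧ l ∈ I),
        ∏ i ∈ I, ∏ j ∈ Icc 1 N \ I, φ₁ τ hbar ((j : ℂ) / N - (i : ℂ) / N)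
      = ∑ s ∈ (univ.powersetCard k).filter (fun s => (m : ZMod N) ∈ s ∧ (l : ZMod N) ∈ s),
          cutProd (φ₁Mod N τ hbar) s := by
  rw [show (Icc 1 N).powersetCard k = _ by rw [← map_univ_iccRep, powersetCard_map],
    filter_map, sum_map]
  refine sum_congr (filter_congr fun s _ => ?_) fun s _ => prod_prod_Icc_sdiff_map_iccRep τ hbar s
  simp only [Function.comp_apply, RelEmbedding.coe_toEmbedding, Finset.mapEmbedding_apply,
    mem_map_iccRep hm, mem_map_iccRep hl]

end Residues

theorem two_point_shift_symmetry_general (τ : ℂ) (hbar : ℂ) (N : ℕ) (hN : 0 < N)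
    (k : ℕ) (l m l' : ℕ)
    (hl : l ∈ Finset.Icc 1 N) (hm : m ∈ Finset.Icc 1 N)
    (hl' : l' ∈ Finset.Icc 1 N)
    (hl'mod : (l' : ℤ) ≡ 2 * (m : ℤ) - (l : ℤ) [ZMOD (N : ℤ)]) :
    ∑ I ∈ ((Finset.Icc 1 N).powersetCard k).filter (fun I => m ∈ I ∧ l ∈ I),
      ∏ i ∈ I, ∏ j ∈ Finset.Icc 1 N \ I, φ₁ τ hbar ((j : ℂ) / N - (i : ℂ) / N)
    = ∑ I ∈ ((Finset.Icc 1 N).powersetCard k).filter (fun I => m ∈ I ∧ l' ∈ I),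
        ∏ i ∈ I, ∏ j ∈ Finset.Icc 1 N \ I, φ₁ τ hbar ((j : ℂ) / N - (i : ℂ) / N) := by
  have : NeZero N := ⟨hN.ne'⟩
  have hreflect : (l' : ZMod N) = 2 * (m : ZMod N) - l := by
    exact_mod_cast (ZMod.intCast_eq_intCast_iff _ _ N).mpr hl'mod
  rw [sum_filter_powersetCard_Icc_eq_sum_cutProd τ hbar k hm hl,
    sum_filter_powersetCard_Icc_eq_sum_cutProd τ hbar k hm hl',
    sum_cutProd_filter_reflect _ k (2 * (m : ZMod N)), hreflect, two_mul, add_sub_cancel_right]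

/-- Identity (t18) of the paper: two-point shift symmetry, where `l'` is the
representative of `2m − l` modulo `N` in `{1,…,N}`. -/
theorem two_point_shift_symmetry (τ : ℂ) (hτ : 0 < τ.im) (hbar : ℂ) (N : ℕ) (hN : 0 < N)
    (k : ℕ) (hk1 : 1 ≤ k) (hkN : k ≤ N) (l m l' : ℕ)
    (hl : l ∈ Finset.Icc 1 N) (hm : m ∈ Finset.Icc 1 N) (hlm : l ≠ m)
    (hl' : l' ∈ Finset.Icc 1 N)
    (hl'mod : (l' : ℤ) ≡ 2 * (m : ℤ) - (l : ℤ) [ZMOD (N : ℤ)]) :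
    ∑ I ∈ ((Finset.Icc 1 N).powersetCard k).filter (fun I => m ∈ I ∧ l ∈ I),
      ∏ i ∈ I, ∏ j ∈ Finset.Icc 1 N \ I, φ₁ τ hbar ((j : ℂ) / N - (i : ℂ) / N)
    = ∑ I ∈ ((Finset.Icc 1 N).powersetCard k).filter (fun I => m ∈ I ∧ l' ∈ I),
        ∏ i ∈ I, ∏ j ∈ Finset.Icc 1 N \ I, φ₁ τ hbar ((j : ℂ) / N - (i : ℂ) / N) :=
  two_point_shift_symmetry_general τ hbar N hN k l m l' hl hm hl' hl'mod
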